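/- Let r ≥ 2 and let c_1, …, c_r ∈ (0,1) with an index m such that c_m > c_i for all i ≠ m. For each i let S_i : ℕ → ℝ be a sequence of positive reals with S_i(n) → ∞, and let f_{i,n}(x) = x^{c_i S_i(n)} (1−x)^{(1−c_i) S_i(n)} / B(c_i S_i(n)+1, (1−c_i) S_i(n)+1) be the density of Beta(c_i S_i(n)+1, (1−c_i) S_i(n)+1). Then lim_{n→∞} ∫_0^1 f_{m,n}(x) ∏_{i≠m} ( ∫_0^x f_{i,n}(t) dt ) dx = 1. (Lemma 2: the probability that the Beta-distributed estimate of the action with maximal reward probability exceeds all other estimates tends to 1 as all observation counts tend to infinity.) -/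

import Mathlib

open MeasureTheory Real Filter Set

/-- The Beta function `B(a,b) = ∫₀¹ t^(a-1) (1-t)^(b-1) dt`. -/
noncomputable def betaFn (a b : ℝ) : ℝ :=
  ∫ t in (0:ℝ)..1, t ^ (a - 1) * (1 - t) ^ (b - 1)

/-- The Beta(a,b) probability density on `[0,1]`. -/
noncomputable def betaPdf (a b : ℝ) (x : ℝ) : ℝ :=
  x ^ (a - 1) * (1 - x) ^ (b - 1) / betaFn a b

/-!
On `[0, 1]` the density of `Beta(c s + 1, (1 - c) s + 1)` is proportional to `g(x) ^ s`, where
`g(x) = x ^ c (1 - x) ^ (1 - c)`. Weighted AM-GM shows that `g` is strictly decreasing on `[c, 1]`,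
so the density is too, and for `c < u < θ` the mass beyond `θ` is at most
`(1 - θ) / (u - c) * (g θ / g u) ^ s`, which tends to `0` as `s → ∞`; reflecting `x ↦ 1 - x`
controls the mass below `θ < c`. Hence the distributions concentrate at `c`. Pick `θ` strictly
between the `c i` (`i ≠ m`) and `c m`. Since the product of the CDFs `F i` is monotone and
bounded by `1`, the integral lies between `∏_{i ≠ m} F i (θ) * (1 - F m (θ))`, which tends
to `1`, and `1`.
-/

open Topology

noncomputable def betaCdf (a b x : ℝ) : ℝ :=
  ∫ t in (0:ℝ)..x, betaPdf a b t

section BetaDistribution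

variable {a b : ℝ}

lemma continuous_rpow_mul_one_sub_rpow {p q : ℝ} (hp : 0 ≤ p) (hq : 0 ≤ q) :
    Continuous fun x : ℝ => x ^ p * (1 - x) ^ q :=
  (continuous_rpow_const hp).mul
    ((continuous_rpow_const hq).comp (continuous_const.sub continuous_id))

lemma betaFn_pos (ha : 1 ≤ a) (hb : 1 ≤ b) : 0 < betaFn a b :=
  intervalIntegral.intervalIntegral_pos_of_pos_on
    ((continuous_rpow_mul_one_sub_rpow (sub_nonneg.2 ha) (sub_nonneg.2 hb)).intervalIntegrable 0 1)
    (fun _ hx => mul_pos (rpow_pos_of_pos hx.1 _) (rpow_pos_of_pos (sub_pos.2 hx.2) _)) one_pos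

lemma betaFn_comm (a b : ℝ) : betaFn a b = betaFn b a := by
  simpa [betaFn, mul_comm] using intervalIntegral.integral_comp_sub_left
    (fun t : ℝ => t ^ (b - 1) * (1 - t) ^ (a - 1)) 1 (a := 0) (b := 1)

lemma betaFn_nonneg (a b : ℝ) : 0 ≤ betaFn a b :=
  intervalIntegral.integral_nonneg zero_le_one fun _ ht =>
    mul_nonneg (rpow_nonneg ht.1 _) (rpow_nonneg (sub_nonneg.2 ht.2) _)

lemma betaPdf_nonneg (a b : ℝ) {x : ℝ} (hx : x ∈ Icc 0 1) : 0 ≤ betaPdf a b x :=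
  div_nonneg (mul_nonneg (rpow_nonneg hx.1 _) (rpow_nonneg (sub_nonneg.2 hx.2) _))
    (betaFn_nonneg a b)

lemma betaPdf_one_sub (a b x : ℝ) : betaPdf a b (1 - x) = betaPdf b a x := by
  rw [betaPdf, betaPdf, sub_sub_cancel, betaFn_comm, mul_comm]

lemma continuous_betaPdf (ha : 1 ≤ a) (hb : 1 ≤ b) : Continuous (betaPdf a b) :=
  (continuous_rpow_mul_one_sub_rpow (sub_nonneg.2 ha) (sub_nonneg.2 hb)).div_const _

lemma integral_betaPdf (ha : 1 ≤ a) (hb : 1 ≤ b) : ∫ x in (0:ℝ)..1, betaPdf a b x = 1 := by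
  unfold betaPdf
  rw [intervalIntegral.integral_div]
  exact div_self (betaFn_pos ha hb).ne'

lemma betaCdf_add_integral_betaPdf (ha : 1 ≤ a) (hb : 1 ≤ b) (θ : ℝ) :
    betaCdf a b θ + ∫ x in θ..1, betaPdf a b x = 1 := by
  have hint := (continuous_betaPdf ha hb).intervalIntegrable (μ := volume)
  rw [betaCdf, intervalIntegral.integral_add_adjacent_intervals (hint 0 θ) (hint θ 1),
    integral_betaPdf ha hb]

lemma betaCdf_eq_one_sub_betaCdf_swap (ha : 1 ≤ a) (hb : 1 ≤ b) (θ : ℝ) :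
    betaCdf a b θ = 1 - betaCdf b a (1 - θ) := by
  have hreflect : betaCdf a b θ = ∫ x in (1 - θ)..1, betaPdf b a x := by
    simpa [betaCdf, betaPdf_one_sub] using
      intervalIntegral.integral_comp_sub_left (betaPdf b a) 1 (a := 0) (b := θ)
  linarith [betaCdf_add_integral_betaPdf hb ha (1 - θ)]

lemma continuous_betaCdf (ha : 1 ≤ a) (hb : 1 ≤ b) : Continuous (betaCdf a b) :=
  intervalIntegral.continuous_primitive
    (fun _ _ => (continuous_betaPdf ha hb).intervalIntegrable _ _) 0

lemma betaCdf_nonneg (a b : ℝ) {x : ℝ} (hx : x ∈ Icc 0 1) : 0 ≤ betaCdf a b x :=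
  intervalIntegral.integral_nonneg hx.1 fun _ ht => betaPdf_nonneg a b ⟨ht.1, ht.2.trans hx.2⟩

lemma betaCdf_le_one (ha : 1 ≤ a) (hb : 1 ≤ b) {x : ℝ} (hx : x ∈ Icc 0 1) :
    betaCdf a b x ≤ 1 := by
  have htail : 0 ≤ ∫ t in x..1, betaPdf a b t :=
    intervalIntegral.integral_nonneg hx.2 fun _ ht => betaPdf_nonneg a b ⟨hx.1.trans ht.1, ht.2⟩
  linarith [betaCdf_add_integral_betaPdf ha hb x]

lemma monotoneOn_betaCdf (ha : 1 ≤ a) (hb : 1 ≤ b) : MonotoneOn (betaCdf a b) (Icc 0 1) := by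
  intro x hx y hy hxy
  have hint := (continuous_betaPdf ha hb).intervalIntegrable (μ := volume)
  rw [betaCdf, betaCdf, ← intervalIntegral.integral_add_adjacent_intervals (hint 0 x) (hint x y),
    le_add_iff_nonneg_right]
  exact intervalIntegral.integral_nonneg hxy fun _ ht =>
    betaPdf_nonneg a b ⟨hx.1.trans ht.1, ht.2.trans hy.2⟩

end BetaDistribution

lemma AntitoneOn.integral_le_sub_mul {f : ℝ → ℝ} {a b : ℝ} (hab : a ≤ b)
    (hf : AntitoneOn f (Icc a b)) : ∫ x in a..b, f x ≤ (b - a) * f a := by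
  have hint : IntervalIntegrable f volume a b := (uIcc_of_le hab ▸ hf).intervalIntegrable
  simpa using intervalIntegral.integral_mono_on hab hint intervalIntegrable_const
    fun x hx => hf ⟨le_rfl, hab⟩ hx hx.1

lemma AntitoneOn.sub_mul_le_integral {f : ℝ → ℝ} {a b : ℝ} (hab : a ≤ b)
    (hf : AntitoneOn f (Icc a b)) : (b - a) * f b ≤ ∫ x in a..b, f x := by
  have hint : IntervalIntegrable f volume a b := (uIcc_of_le hab ▸ hf).intervalIntegrable
  simpa using intervalIntegral.integral_mono_on hab intervalIntegrable_const hint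
    fun x hx => hf hx ⟨hab, le_rfl⟩ hx.2

noncomputable def betaProfile (c x : ℝ) : ℝ := x ^ c * (1 - x) ^ (1 - c)

section BetaProfile

variable {c s u v x : ℝ}

lemma betaProfile_nonneg (c : ℝ) (hx : x ∈ Icc 0 1) : 0 ≤ betaProfile c x :=
  mul_nonneg (rpow_nonneg hx.1 _) (rpow_nonneg (sub_nonneg.2 hx.2) _)

lemma betaProfile_pos (c : ℝ) (hx : x ∈ Ioo 0 1) : 0 < betaProfile c x :=
  mul_pos (rpow_pos_of_pos hx.1 _) (rpow_pos_of_pos (sub_pos.2 hx.2) _)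

/-- Weighted AM-GM with weights `c, 1 - c` applied to `v / u` and `(1 - v) / (1 - u)`. -/
lemma betaProfile_le_mul (hc : c ∈ Icc 0 1) (hu : u ∈ Ioo 0 1) (hv : v ∈ Icc 0 1) :
    betaProfile c v ≤ betaProfile c u * (1 + (v - u) * (c - u) / (u * (1 - u))) := by
  have hu1 : 0 < 1 - u := sub_pos.2 hu.2
  have hp : 0 ≤ v / u := div_nonneg hv.1 hu.1.le
  have hq : 0 ≤ (1 - v) / (1 - u) := div_nonneg (sub_nonneg.2 hv.2) hu1.le
  have hamgm := geom_mean_le_arith_mean2_weighted hc.1 (sub_nonneg.2 hc.2) hp hq (by ring)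
  have hfactor : betaProfile c v =
      betaProfile c u * ((v / u) ^ c * ((1 - v) / (1 - u)) ^ (1 - c)) := by
    rw [betaProfile, betaProfile, mul_mul_mul_comm, ← mul_rpow hu.1.le hp, ← mul_rpow hu1.le hq,
      mul_div_cancel₀ _ hu.1.ne', mul_div_cancel₀ _ hu1.ne']
  have hmean : c * (v / u) + (1 - c) * ((1 - v) / (1 - u)) =
      1 + (v - u) * (c - u) / (u * (1 - u)) := by
    field_simp [hu.1.ne', hu1.ne']
    ring
  rw [hfactor, ← hmean]
  exact mul_le_mul_of_nonneg_left hamgm (betaProfile_nonneg c ⟨hu.1.le, hu.2.le⟩)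

lemma strictAntiOn_betaProfile (hc : c ∈ Ioo 0 1) : StrictAntiOn (betaProfile c) (Icc c 1) := by
  intro u hu v hv huv
  have hu' : u ∈ Ioo 0 1 := ⟨hc.1.trans_le hu.1, huv.trans_le hv.2⟩
  set w := (u + v) / 2 with hw_def
  have hw : w ∈ Ioo 0 1 := ⟨by linarith [hu'.1], by linarith [hv.2]⟩
  have hvw : betaProfile c v < betaProfile c w := by
    have hneg : (v - w) * (c - w) / (w * (1 - w)) < 0 :=
      div_neg_of_neg_of_pos (mul_neg_of_pos_of_neg (by linarith) (by linarith [hu.1]))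
        (mul_pos hw.1 (sub_pos.2 hw.2))
    calc betaProfile c v ≤ betaProfile c w * (1 + (v - w) * (c - w) / (w * (1 - w))) :=
          betaProfile_le_mul ⟨hc.1.le, hc.2.le⟩ hw ⟨hc.1.le.trans hv.1, hv.2⟩
      _ < betaProfile c w := mul_lt_of_lt_one_right (betaProfile_pos c hw) (by linarith)
  have hwu : betaProfile c w ≤ betaProfile c u := by
    have hnonpos : (w - u) * (c - u) / (u * (1 - u)) ≤ 0 :=
      div_nonpos_of_nonpos_of_nonneg
        (mul_nonpos_of_nonneg_of_nonpos (by linarith) (by linarith [hu.1]))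
        (mul_nonneg hu'.1.le (sub_nonneg.2 hu'.2.le))
    calc betaProfile c w ≤ betaProfile c u * (1 + (w - u) * (c - u) / (u * (1 - u))) :=
          betaProfile_le_mul ⟨hc.1.le, hc.2.le⟩ hu' ⟨hw.1.le, hw.2.le⟩
      _ ≤ betaProfile c u :=
          mul_le_of_le_one_right (betaProfile_nonneg c ⟨hu'.1.le, hu'.2.le⟩) (by linarith)
  exact hvw.trans_le hwu

lemma betaPdf_eq_betaProfile_rpow (c s : ℝ) (hx : x ∈ Icc 0 1) :
    betaPdf (c * s + 1) ((1 - c) * s + 1) x =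
      betaProfile c x ^ s / betaFn (c * s + 1) ((1 - c) * s + 1) := by
  rw [betaPdf, betaProfile, mul_rpow (rpow_nonneg hx.1 _) (rpow_nonneg (sub_nonneg.2 hx.2) _),
    ← rpow_mul hx.1, ← rpow_mul (sub_nonneg.2 hx.2), add_sub_cancel_right, add_sub_cancel_right]

lemma antitoneOn_betaPdf (hc : c ∈ Ioo 0 1) (hs : 0 ≤ s) :
    AntitoneOn (betaPdf (c * s + 1) ((1 - c) * s + 1)) (Icc c 1) := by
  intro x hx y hy hxy
  have hx' : x ∈ Icc 0 1 := ⟨hc.1.le.trans hx.1, hx.2⟩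
  have hy' : y ∈ Icc 0 1 := ⟨hc.1.le.trans hy.1, hy.2⟩
  rw [betaPdf_eq_betaProfile_rpow c s hx', betaPdf_eq_betaProfile_rpow c s hy']
  gcongr
  · exact betaFn_nonneg _ _
  · exact betaProfile_nonneg c hy'
  · exact (strictAntiOn_betaProfile hc).antitoneOn hx hy hxy

end BetaProfile

section Concentration

variable {c θ : ℝ}

lemma one_le_betaParams {s : ℝ} (hc : c ∈ Icc 0 1) (hs : 0 ≤ s) :
    1 ≤ c * s + 1 ∧ 1 ≤ (1 - c) * s + 1 :=
  ⟨le_add_of_nonneg_left (mul_nonneg hc.1 hs),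
    le_add_of_nonneg_left (mul_nonneg (sub_nonneg.2 hc.2) hs)⟩

lemma one_sub_betaCdf_le {u s : ℝ} (hc : c ∈ Ioo 0 1) (hcu : c < u) (huθ : u < θ)
    (hθ : θ ≤ 1) (hs : 0 ≤ s) :
    1 - betaCdf (c * s + 1) ((1 - c) * s + 1) θ ≤
      (1 - θ) / (u - c) * (betaProfile c θ / betaProfile c u) ^ s := by
  set p := betaPdf (c * s + 1) ((1 - c) * s + 1)
  obtain ⟨ha, hb⟩ := one_le_betaParams (Ioo_subset_Icc_self hc) hs
  have hanti := antitoneOn_betaPdf hc hs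
  have hu : u ∈ Ioo 0 1 := ⟨hc.1.trans hcu, huθ.trans_le hθ⟩
  have hθ' : θ ∈ Icc 0 1 := ⟨hu.1.le.trans huθ.le, hθ⟩
  have htail : ∫ x in θ..1, p x ≤ (1 - θ) * p θ :=
    (hanti.mono (Icc_subset_Icc (hcu.trans huθ).le le_rfl)).integral_le_sub_mul hθ
  have hmass : (u - c) * p u ≤ 1 := by
    have hint := (continuous_betaPdf ha hb).intervalIntegrable (μ := volume)
    calc (u - c) * p u ≤ ∫ x in c..u, p x :=
          (hanti.mono (Icc_subset_Icc le_rfl hu.2.le)).sub_mul_le_integral hcu.le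
      _ = betaCdf _ _ u - betaCdf _ _ c :=
          (intervalIntegral.integral_interval_sub_left (hint 0 u) (hint 0 c)).symm
      _ ≤ 1 := by
          linarith [betaCdf_le_one ha hb ⟨hu.1.le, hu.2.le⟩,
            betaCdf_nonneg (c * s + 1) ((1 - c) * s + 1) ⟨hc.1.le, hc.2.le⟩]
  have hratio : p θ = p u * (betaProfile c θ / betaProfile c u) ^ s := by
    simp only [p]
    rw [betaPdf_eq_betaProfile_rpow c s hθ',
      betaPdf_eq_betaProfile_rpow c s ⟨hu.1.le, hu.2.le⟩,
      div_rpow (betaProfile_nonneg c hθ') (betaProfile_pos c hu).le]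
    field_simp [(rpow_pos_of_pos (betaProfile_pos c hu) s).ne']
  calc 1 - betaCdf (c * s + 1) ((1 - c) * s + 1) θ = ∫ x in θ..1, p x := by
        linarith [betaCdf_add_integral_betaPdf ha hb θ]
    _ ≤ (1 - θ) * p u * (betaProfile c θ / betaProfile c u) ^ s := by
        rw [mul_assoc, ← hratio]
        exact htail
    _ ≤ (1 - θ) * (1 / (u - c)) * (betaProfile c θ / betaProfile c u) ^ s := by
        gcongr
        · exact rpow_nonneg (div_nonneg (betaProfile_nonneg c hθ') (betaProfile_pos c hu).le) s
        · rw [le_div_iff₀ (sub_pos.2 hcu), mul_comm]; exact hmass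
    _ = (1 - θ) / (u - c) * (betaProfile c θ / betaProfile c u) ^ s := by ring

variable {α : Type*} {l : Filter α} {S : α → ℝ}

lemma tendsto_betaCdf_one (hc : c ∈ Ioo 0 1) (hcθ : c < θ) (hθ : θ ≤ 1)
    (hS : Tendsto S l atTop) :
    Tendsto (fun n => betaCdf (c * S n + 1) ((1 - c) * S n + 1) θ) l (𝓝 1) := by
  set u := (c + θ) / 2 with hu_def
  have hu : u ∈ Ioo 0 1 := ⟨by linarith [hc.1], by linarith [hc.2]⟩
  set q := betaProfile c θ / betaProfile c u
  have hq0 : 0 ≤ q :=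
    div_nonneg (betaProfile_nonneg c ⟨by linarith [hc.1], hθ⟩) (betaProfile_pos c hu).le
  have hq1 : q < 1 := (div_lt_one (betaProfile_pos c hu)).2 <|
    strictAntiOn_betaProfile hc ⟨by linarith, hu.2.le⟩ ⟨hcθ.le, hθ⟩ (by linarith)
  have hbound : Tendsto (fun n => 1 - (1 - θ) / (u - c) * q ^ S n) l (𝓝 1) := by
    simpa using (((tendsto_rpow_atTop_of_base_lt_one q (by linarith) hq1).comp hS).const_mul
      ((1 - θ) / (u - c))).const_sub 1
  refine tendsto_of_tendsto_of_tendsto_of_le_of_le' hbound tendsto_const_nhds ?_ ?_ <;>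
    filter_upwards [hS.eventually_ge_atTop 0] with n hn
  · linarith [one_sub_betaCdf_le hc (by linarith : c < u) (by linarith : u < θ) hθ hn]
  · obtain ⟨ha, hb⟩ := one_le_betaParams (Ioo_subset_Icc_self hc) hn
    exact betaCdf_le_one ha hb ⟨by linarith [hc.1], hθ⟩

lemma tendsto_betaCdf_zero (hc : c ∈ Ioo 0 1) (hθ : 0 ≤ θ) (hθc : θ < c)
    (hS : Tendsto S l atTop) :
    Tendsto (fun n => betaCdf (c * S n + 1) ((1 - c) * S n + 1) θ) l (𝓝 0) := by
  have hreflect := tendsto_betaCdf_one (θ := 1 - θ) ⟨sub_pos.2 hc.2, sub_lt_self 1 hc.1⟩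
    (by linarith) (by linarith) hS
  rw [sub_sub_cancel] at hreflect
  refine (sub_self (1 : ℝ) ▸ hreflect.const_sub 1).congr' ?_
  filter_upwards [hS.eventually_ge_atTop 0] with n hn
  obtain ⟨ha, hb⟩ := one_le_betaParams (Ioo_subset_Icc_self hc) hn
  exact (betaCdf_eq_one_sub_betaCdf_swap ha hb θ).symm

lemma tendsto_integral_betaPdf_one (hc : c ∈ Ioo 0 1) (hθ : 0 ≤ θ) (hθc : θ < c)
    (hS : Tendsto S l atTop) :
    Tendsto (fun n => ∫ x in θ..1, betaPdf (c * S n + 1) ((1 - c) * S n + 1) x) l (𝓝 1) := by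
  refine (sub_zero (1 : ℝ) ▸ (tendsto_betaCdf_zero hc hθ hθc hS).const_sub 1).congr' ?_
  filter_upwards [hS.eventually_ge_atTop 0] with n hn
  obtain ⟨ha, hb⟩ := one_le_betaParams (Ioo_subset_Icc_self hc) hn
  linarith [betaCdf_add_integral_betaPdf ha hb θ]

end Concentration

lemma integral_mul_mem_Icc {p G : ℝ → ℝ} {θ : ℝ} (hθ : θ ∈ Icc (0:ℝ) 1)
    (hp : Continuous p) (hG : Continuous G) (hp0 : ∀ x ∈ Icc (0:ℝ) 1, 0 ≤ p x)
    (hG01 : ∀ x ∈ Icc (0:ℝ) 1, G x ∈ Icc (0:ℝ) 1) (hGm : MonotoneOn G (Icc 0 1)) :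
    ∫ x in (0:ℝ)..1, p x * G x ∈
      Icc (G θ * ∫ x in θ..1, p x) (∫ x in (0:ℝ)..1, p x) := by
  have hint : ∀ a b, IntervalIntegrable (fun x => p x * G x) volume a b :=
    (hp.mul hG).intervalIntegrable
  have hleft : 0 ≤ ∫ x in (0:ℝ)..θ, p x * G x :=
    intervalIntegral.integral_nonneg hθ.1 fun x hx =>
      mul_nonneg (hp0 x ⟨hx.1, hx.2.trans hθ.2⟩) (hG01 x ⟨hx.1, hx.2.trans hθ.2⟩).1
  have hright : G θ * ∫ x in θ..1, p x ≤ ∫ x in θ..1, p x * G x := by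
    rw [← intervalIntegral.integral_const_mul]
    refine intervalIntegral.integral_mono_on hθ.2 ((hp.intervalIntegrable θ 1).const_mul _)
      (hint θ 1) fun x hx => ?_
    have hx' : x ∈ Icc (0:ℝ) 1 := ⟨hθ.1.trans hx.1, hx.2⟩
    rw [mul_comm]
    exact mul_le_mul_of_nonneg_left (hGm hθ hx' hx.1) (hp0 x hx')
  constructor
  · rw [← intervalIntegral.integral_add_adjacent_intervals (hint 0 θ) (hint θ 1)]
    linarith
  · exact intervalIntegral.integral_mono_on zero_le_one (hint 0 1) (hp.intervalIntegrable 0 1)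
      fun x hx => mul_le_of_le_one_right (hp0 x hx) (hG01 x hx).2

section ProductOfCdfs

variable {ι : Type*} (s : Finset ι) {a b : ι → ℝ}

lemma continuous_prod_betaCdf (ha : ∀ i ∈ s, 1 ≤ a i) (hb : ∀ i ∈ s, 1 ≤ b i) :
    Continuous fun x => ∏ i ∈ s, betaCdf (a i) (b i) x :=
  continuous_finsetProd s fun i hi => continuous_betaCdf (ha i hi) (hb i hi)

lemma prod_betaCdf_mem_Icc (ha : ∀ i ∈ s, 1 ≤ a i) (hb : ∀ i ∈ s, 1 ≤ b i) {x : ℝ}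
    (hx : x ∈ Icc (0:ℝ) 1) : ∏ i ∈ s, betaCdf (a i) (b i) x ∈ Icc (0:ℝ) 1 :=
  ⟨Finset.prod_nonneg fun _ _ => betaCdf_nonneg _ _ hx,
    Finset.prod_le_one (fun _ _ => betaCdf_nonneg _ _ hx)
      fun i hi => betaCdf_le_one (ha i hi) (hb i hi) hx⟩

lemma monotoneOn_prod_betaCdf (ha : ∀ i ∈ s, 1 ≤ a i) (hb : ∀ i ∈ s, 1 ≤ b i) :
    MonotoneOn (fun x => ∏ i ∈ s, betaCdf (a i) (b i) x) (Icc 0 1) :=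
  fun _ hx _ hy hxy => Finset.prod_le_prod (fun _ _ => betaCdf_nonneg _ _ hx)
    fun i hi => monotoneOn_betaCdf (ha i hi) (hb i hi) hx hy hxy

end ProductOfCdfs

theorem best_estimate_wins_general (r : ℕ) (c : Fin r → ℝ)
    (hc : ∀ i, c i ∈ Set.Ioo (0:ℝ) 1) (m : Fin r) (hm : ∀ i, i ≠ m → c i < c m)
    (S : Fin r → ℕ → ℝ)
    (hS : ∀ i, Tendsto (S i) atTop atTop) :
    Tendsto (fun n : ℕ =>
        ∫ x in (0:ℝ)..1,
          betaPdf (c m * S m n + 1) ((1 - c m) * S m n + 1) x *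
            ∏ i ∈ Finset.univ.erase m,
              ∫ t in (0:ℝ)..x, betaPdf (c i * S i n + 1) ((1 - c i) * S i n + 1) t)
      atTop (nhds 1) := by
  set E := Finset.univ.erase m
  obtain ⟨θ, hθE, hθ0, hθm⟩ : ∃ θ, (∀ i ∈ E, c i < θ) ∧ 0 < θ ∧ θ < c m :=
    (((eventually_all_finset _).2 fun i hi => eventually_nhdsWithin_of_eventually_nhds
      (eventually_gt_nhds (hm i (Finset.ne_of_mem_erase hi)))).and
      (Ioo_mem_nhdsLT (hc m).1)).exists
  have hθ : θ ∈ Icc (0:ℝ) 1 := ⟨hθ0.le, (hθm.trans (hc m).2).le⟩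
  have hlower : Tendsto (fun n => (∏ i ∈ E,
      betaCdf (c i * S i n + 1) ((1 - c i) * S i n + 1) θ) *
      ∫ x in θ..1, betaPdf (c m * S m n + 1) ((1 - c m) * S m n + 1) x) atTop (𝓝 1) := by
    simpa using (tendsto_finsetProd _ fun i hi => tendsto_betaCdf_one (hc i) (hθE i hi) hθ.2
      (hS i)).mul (tendsto_integral_betaPdf_one (hc m) hθ0.le hθm (hS m))
  have hbounds := (eventually_all.2 fun i => (hS i).eventually_ge_atTop 0).mono fun n hn =>
    have hab i := one_le_betaParams (Ioo_subset_Icc_self (hc i)) (hn i)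
    have ha i (_ : i ∈ E) := (hab i).1
    have hb i (_ : i ∈ E) := (hab i).2
    have h := integral_mul_mem_Icc hθ (continuous_betaPdf (hab m).1 (hab m).2)
      (continuous_prod_betaCdf E ha hb) (fun _ hx => betaPdf_nonneg _ _ hx)
      (fun _ hx => prod_betaCdf_mem_Icc E ha hb hx) (monotoneOn_prod_betaCdf E ha hb)
    And.intro h.1 (h.2.trans_eq (integral_betaPdf (hab m).1 (hab m).2))
  exact tendsto_of_tendsto_of_tendsto_of_le_of_le' hlower tendsto_const_nhds
    (hbounds.mono fun _ h => h.1) (hbounds.mono fun _ h => h.2)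

/-- Lemma 2: the probability that the Beta-distributed estimate of the action with the
strictly maximal reward probability exceeds all other estimates tends to `1` as all
observation counts tend to infinity. -/
theorem best_estimate_wins (r : ℕ) (hr : 2 ≤ r) (c : Fin r → ℝ)
    (hc : ∀ i, c i ∈ Set.Ioo (0:ℝ) 1) (m : Fin r) (hm : ∀ i, i ≠ m → c i < c m)
    (S : Fin r → ℕ → ℝ) (hSpos : ∀ i n, 0 < S i n)
    (hS : ∀ i, Tendsto (S i) atTop atTop) :
    Tendsto (fun n : ℕ =>
        ∫ x in (0:ℝ)..1,
          betaPdf (c m * S m n + 1) ((1 - c m) * S m n + 1) x *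
            ∏ i ∈ Finset.univ.erase m,
              ∫ t in (0:ℝ)..x, betaPdf (c i * S i n + 1) ((1 - c i) * S i n + 1) t)
      atTop (nhds 1) :=
  best_estimate_wins_general r c hc m hm S hS
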